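/- Let G be a group, σ an automorphism of G, g, h ∈ G, and k a positive integer. Then for natural numbers s < k and t, one has h = ρ_{(g,1)^{s+tk}}(1_G) if and only if ρ_{(g,1)^s}^{-1}(h) = ρ_{(g',k)^t}(1_G), where g' = ρ_{(g,1)^k}(1_G). Hence SDLP(G, σ) reduces to k instances of SDLP(G, σ^k). -/

import Mathlib

/-- Multiplication in the semidirect product `G ⋊_σ ℤ` for `σ ∈ Aut(G)`. -/
def sdMulZ {G : Type*} [Group G] (σ : MulAut G) (x y : G × ℤ) : G × ℤ :=
  (x.1 * (σ ^ x.2) y.1, x.2 + y.2)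

/-- The `t`-th power (natural exponent) in `G ⋊_σ ℤ`. -/
def sdPowZ {G : Type*} [Group G] (σ : MulAut G) (x : G × ℤ) : ℕ → G × ℤ
  | 0 => (1, 0)
  | t + 1 => sdMulZ σ x (sdPowZ σ x t)

/-- The transformation `ρ_{(g,s)} : G → G`, `x ↦ g·σ^s(x)`. -/
def rhoZ {G : Type*} [Group G] (σ : MulAut G) (x : G × ℤ) : G → G :=
  fun z => x.1 * (σ ^ x.2) z

/-- The inverse of the transformation `ρ_{(g,s)}` (it is invertible since `σ ∈ Aut(G)`). -/
def rhoZinv {G : Type*} [Group G] (σ : MulAut G) (x : G × ℤ) : G → G :=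
  fun z => (σ ^ (-x.2)) (x.1⁻¹ * z)

/-!
`ρ` is an action of `G ⋊_σ ℤ` on `G`, and `ρ_x(1) = x.1`. Hence `(g', k) = (g, 1)^k`, so
`ρ_{(g',k)^t} = ρ_{(g,1)^{tk}}` and `ρ_{(g,1)^{s+tk}} = ρ_{(g,1)^s} ∘ ρ_{(g,1)^{tk}}`; applying the
inverse of `ρ_{(g,1)^s}` gives the equivalence.
-/

section
variable {G : Type*} [Group G] (σ : MulAut G)

lemma sdMulZ_assoc (x y z : G × ℤ) :
    sdMulZ σ (sdMulZ σ x y) z = sdMulZ σ x (sdMulZ σ y z) := by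
  simp [sdMulZ, zpow_add, mul_assoc, add_assoc]

lemma sdPowZ_add (x : G × ℤ) (m n : ℕ) :
    sdPowZ σ x (m + n) = sdMulZ σ (sdPowZ σ x m) (sdPowZ σ x n) := by
  induction m with
  | zero => simp [sdPowZ, sdMulZ]
  | succ m ih => rw [Nat.add_right_comm, sdPowZ, sdPowZ, ih, sdMulZ_assoc]

lemma sdPowZ_mul (x : G × ℤ) (t k : ℕ) :
    sdPowZ σ x (t * k) = sdPowZ σ (sdPowZ σ x k) t := by
  induction t with
  | zero => simp [sdPowZ]
  | succ t ih => rw [Nat.succ_mul, Nat.add_comm, sdPowZ_add, ih, sdPowZ]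

lemma sdPowZ_snd (x : G × ℤ) (n : ℕ) : (sdPowZ σ x n).2 = n * x.2 := by
  induction n with
  | zero => simp [sdPowZ]
  | succ n ih => simp only [sdPowZ, sdMulZ, ih, Nat.cast_add, Nat.cast_one]; ring

lemma rhoZ_one (x : G × ℤ) : rhoZ σ x 1 = x.1 := by
  simp [rhoZ]

lemma rhoZ_sdMulZ (x y : G × ℤ) (z : G) :
    rhoZ σ (sdMulZ σ x y) z = rhoZ σ x (rhoZ σ y z) := by
  simp [rhoZ, sdMulZ, zpow_add, mul_assoc]

lemma rhoZinv_rhoZ (x : G × ℤ) (z : G) : rhoZinv σ x (rhoZ σ x z) = z := by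
  rw [rhoZ, rhoZinv, inv_mul_cancel_left, ← MulAut.mul_apply, ← zpow_add, neg_add_cancel,
    zpow_zero, MulAut.one_apply]

lemma rhoZ_rhoZinv (x : G × ℤ) (z : G) : rhoZ σ x (rhoZinv σ x z) = z := by
  rw [rhoZ, rhoZinv, ← MulAut.mul_apply, ← zpow_add, add_neg_cancel, zpow_zero,
    MulAut.one_apply, mul_inv_cancel_left]

lemma eq_rhoZ_iff_rhoZinv_eq (x : G × ℤ) (h z : G) :
    h = rhoZ σ x z ↔ rhoZinv σ x h = z := by
  constructor
  · rintro rfl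
    exact rhoZinv_rhoZ σ x z
  · rintro rfl
    exact (rhoZ_rhoZinv σ x h).symm

end

theorem sdlp_reduce_to_power_general {G : Type*} [Group G] (σ : MulAut G) (g h : G)
    (k : ℕ) :
    ∀ s t : ℕ, s < k →
      (h = rhoZ σ (sdPowZ σ (g, 1) (s + t * k)) 1 ↔
        rhoZinv σ (sdPowZ σ (g, 1) s) h
          = rhoZ σ (sdPowZ σ (rhoZ σ (sdPowZ σ (g, 1) k) 1, (k : ℤ)) t) 1) := by
  intro s t _
  have hgen : (rhoZ σ (sdPowZ σ (g, 1) k) 1, (k : ℤ)) = sdPowZ σ (g, 1) k :=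
    Prod.ext (rhoZ_one σ _) (by simp [sdPowZ_snd])
  rw [hgen, ← sdPowZ_mul, sdPowZ_add, rhoZ_sdMulZ, eq_rhoZ_iff_rhoZinv_eq]

/-- for `s < k`, `h = ρ_{(g,1)^{s+tk}}(1_G)` iff
`ρ_{(g,1)^s}^{-1}(h) = ρ_{(g',k)^t}(1_G)` where `g' = ρ_{(g,1)^k}(1_G)`.
Hence SDLP`(G,σ)` reduces to `k` instances of SDLP`(G,σ^k)`. -/
theorem sdlp_reduce_to_power {G : Type*} [Group G] (σ : MulAut G) (g h : G)
    (k : ℕ) (hk : 0 < k) :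
    ∀ s t : ℕ, s < k →
      (h = rhoZ σ (sdPowZ σ (g, 1) (s + t * k)) 1 ↔
        rhoZinv σ (sdPowZ σ (g, 1) s) h
          = rhoZ σ (sdPowZ σ (rhoZ σ (sdPowZ σ (g, 1) k) 1, (k : ℤ)) t) 1) :=
  sdlp_reduce_to_power_general σ g h k
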